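/- As Λ → +∞ with masses m₁ = m₁(Λ), m₂ = m₂(Λ) → ∞ chosen under the Pauli-Villars conditions, the pointwise limit lim ((2 log Λ)/(3π) - M(k)) = U(k) holds for each fixed k ∈ ℝ³, where U is the Uehling multiplier. -/

import Mathlib

open Real Filter

/-- The Pauli–Villars multiplier `M(k)`. -/
noncomputable def pvM (c m : Fin 3 → ℝ) (k : EuclideanSpace ℝ (Fin 3)) : ℝ :=
  -(2 / π) * ∑ j : Fin 3, c j *
    ∫ u in (0 : ℝ)..1, u * (1 - u) * Real.log ((m j) ^ 2 + u * (1 - u) * ‖k‖ ^ 2)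

/-- The Uehling multiplier. -/
noncomputable def uehlingU (k : EuclideanSpace ℝ (Fin 3)) : ℝ :=
  (‖k‖ ^ 2 / (4 * π)) *
    ∫ z in (0 : ℝ)..1, (z ^ 2 - z ^ 4 / 3) / (1 + ‖k‖ ^ 2 * (1 - z ^ 2) / 4)

/-! Put `K = ‖k‖²` and `G(t) = ∫₀¹ u(1-u) log(1 + u(1-u) t) du`. Since
`∫₀¹ u(1-u) du = 1/6`, each Pauli–Villars integral splits as `log(mⱼ²)/6 + G(K/mⱼ²)`; by the
regularisation condition the logarithms sum to `(2 log Λ)/(3π)`, leaving `(2/π) Σⱼ cⱼ G(K/mⱼ²)`.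
As `0 ≤ G(t) ≤ t/16` and the `cⱼ` are bounded, the heavy-mass terms vanish when `m₁, m₂ → ∞`.
The surviving term `(2/π) G(K)` is the Uehling multiplier: the substitution `u = (1 ± z)/2` and
an integration by parts against `(z - z³/3)' = 1 - z²` turn `G(K)` into
`(K/8) ∫₀¹ (z² - z⁴/3)/(1 + K(1-z²)/4) dz`. -/

open Topology Set MeasureTheory intervalIntegral

noncomputable def pvRemainder (t : ℝ) : ℝ :=
  ∫ u in (0:ℝ)..1, u * (1 - u) * log (1 + u * (1 - u) * t)

lemma continuousOn_mul_log_one_add_mul {t : ℝ} (ht : 0 ≤ t) :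
    ContinuousOn (fun s => s * log (1 + s * t)) (Ici 0) :=
  continuousOn_id.mul <| ContinuousOn.log (by fun_prop) fun s hs =>
    (by nlinarith [mul_nonneg (mem_Ici.1 hs) ht] : (0:ℝ) < 1 + s * t).ne'

lemma intervalIntegrable_pvRemainder_integrand {t : ℝ} (ht : 0 ≤ t) :
    IntervalIntegrable (fun u => u * (1 - u) * log (1 + u * (1 - u) * t)) volume 0 1 := by
  refine ((continuousOn_mul_log_one_add_mul ht).comp (by fun_prop) fun u hu => ?_)
    |>.intervalIntegrable
  rw [uIcc_of_le zero_le_one] at hu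
  exact mul_nonneg hu.1 (sub_nonneg.2 hu.2)

lemma abs_pvRemainder_le {t : ℝ} (ht : 0 ≤ t) : |pvRemainder t| ≤ t / 16 := by
  have := norm_integral_le_of_norm_le_const (a := 0) (b := 1) (C := t / 16)
    (f := fun u => u * (1 - u) * log (1 + u * (1 - u) * t)) fun u hu => ?_
  · simpa [pvRemainder] using this
  rw [uIoc_of_le zero_le_one] at hu
  set s := u * (1 - u)
  have hs0 : 0 ≤ s := mul_nonneg hu.1.le (sub_nonneg.2 hu.2)
  have hs4 : s ≤ 1 / 4 := by nlinarith [sq_nonneg (u - 1 / 2)]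
  have hst : 0 ≤ s * t := mul_nonneg hs0 ht
  have hlog : log (1 + s * t) ≤ s * t := by
    linarith [log_le_sub_one_of_pos (by linarith : 0 < 1 + s * t)]
  rw [norm_of_nonneg (mul_nonneg hs0 (log_nonneg (by linarith)))]
  calc s * log (1 + s * t) ≤ s * (s * t) := mul_le_mul_of_nonneg_left hlog hs0
    _ ≤ 1 / 4 * (1 / 4 * t) := by gcongr
    _ = t / 16 := by ring

lemma tendsto_pvRemainder_nhdsGE_zero : Tendsto pvRemainder (𝓝[≥] 0) (𝓝 0) := by
  refine squeeze_zero_norm' (eventually_nhdsWithin_of_forall fun t ht => ?_)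
    (tendsto_nhdsWithin_of_tendsto_nhds ((continuous_id.div_const 16).tendsto' 0 0 (by simp)))
  exact (norm_eq_abs _).trans_le (abs_pvRemainder_le ht)

lemma tendsto_pvRemainder_div {α : Type*} {l : Filter α} {a : α → ℝ} {K : ℝ} (hK : 0 ≤ K)
    (ha : Tendsto a l atTop) : Tendsto (fun x => pvRemainder (K / a x)) l (𝓝 0) :=
  tendsto_pvRemainder_nhdsGE_zero.comp <| tendsto_nhdsWithin_iff.2
    ⟨tendsto_const_nhds.div_atTop ha,
      (ha.eventually_ge_atTop 0).mono fun _ hx => div_nonneg hK hx⟩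

lemma integral_mul_log_add_eq {a K : ℝ} (ha : 0 < a) (hK : 0 ≤ K) :
    ∫ u in (0:ℝ)..1, u * (1 - u) * log (a + u * (1 - u) * K) =
      log a / 6 + pvRemainder (K / a) := by
  have hsplit : EqOn (fun u => u * (1 - u) * log (a + u * (1 - u) * K))
      (fun u => u * (1 - u) * log a + u * (1 - u) * log (1 + u * (1 - u) * (K / a)))
      (uIcc 0 1) := by
    intro u hu
    rw [uIcc_of_le zero_le_one] at hu
    have : 0 ≤ u * (1 - u) * (K / a) :=
      mul_nonneg (mul_nonneg hu.1 (sub_nonneg.2 hu.2)) (div_nonneg hK ha.le)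
    have hfactor : a + u * (1 - u) * K = a * (1 + u * (1 - u) * (K / a)) := by field_simp
    simp only [hfactor, log_mul ha.ne' (by positivity : 1 + u * (1 - u) * (K / a) ≠ 0)]
    ring
  rw [integral_congr hsplit, integral_add (Continuous.intervalIntegrable (by fun_prop) _ _)
    (intervalIntegrable_pvRemainder_integrand (div_nonneg hK ha.le)),
    intervalIntegral.integral_mul_const]
  have hmass : ∫ u in (0:ℝ)..1, u * (1 - u) = 1 / 6 := by
    norm_num [mul_sub, ← sq, intervalIntegral.integral_sub, integral_pow]
  rw [hmass, pvRemainder]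
  ring

lemma integral_comp_mul_one_sub (h : ℝ → ℝ)
    (hh : IntervalIntegrable (fun u => h (u * (1 - u))) volume 0 1) :
    ∫ u in (0:ℝ)..1, h (u * (1 - u)) = ∫ z in (0:ℝ)..1, h ((1 - z ^ 2) / 4) := by
  have hsub (s : ℝ) (hs : s ^ 2 = 1) : ∫ z in (0:ℝ)..1, h ((1 - z ^ 2) / 4) =
      (s / 2)⁻¹ • ∫ u in s / 2 * 0 + 1 / 2..s / 2 * 1 + 1 / 2, h (u * (1 - u)) := by
    -- `u = (1 + s z) / 2` maps `[0, 1]` onto one half of `[0, 1]`, and `u (1 - u) = (1 - z²) / 4`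
    rw [← integral_comp_mul_add _ (div_ne_zero (by rintro rfl; norm_num at hs) two_ne_zero)]
    congr with z
    congr 1
    linear_combination (z ^ 2 / 4) * hs
  have hleft := hsub (-1) (by norm_num)
  have hright := hsub 1 (by norm_num)
  norm_num at hleft hright
  rw [integral_symm 0 (1 / 2)] at hleft
  rw [← integral_add_adjacent_intervals (b := 1 / 2) (hh.mono_set ?_) (hh.mono_set ?_)]
  · linarith
  all_goals exact uIcc_subset_uIcc (by norm_num) (by norm_num)

lemma integral_mul_log_one_add_eq {t : ℝ} (ht : 0 ≤ t) :
    ∫ z in (0:ℝ)..1, (1 - z ^ 2) / 4 * log (1 + (1 - z ^ 2) / 4 * t) =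
      t / 8 * ∫ z in (0:ℝ)..1, (z ^ 2 - z ^ 4 / 3) / (1 + t * (1 - z ^ 2) / 4) := by
  have hpos : ∀ z ∈ uIcc (0:ℝ) 1, 0 < 1 + t * (1 - z ^ 2) / 4 := fun z hz => by
    rw [uIcc_of_le zero_le_one] at hz
    nlinarith [mul_nonneg ht (by nlinarith [hz.1, hz.2] : 0 ≤ 1 - z ^ 2)]
  have hparts := integral_mul_deriv_eq_deriv_mul (a := 0) (b := 1)
    (u := fun z => log (1 + t * (1 - z ^ 2) / 4))
    (u' := fun z => -(t * z / 2) / (1 + t * (1 - z ^ 2) / 4))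
    (v := fun z => z - z ^ 3 / 3) (v' := fun z => 1 - z ^ 2)
    (fun z hz => ?_) (fun z _ => ?_) ?_ (Continuous.intervalIntegrable (by fun_prop) _ _)
  · norm_num at hparts
    calc ∫ z in (0:ℝ)..1, (1 - z ^ 2) / 4 * log (1 + (1 - z ^ 2) / 4 * t)
        = (∫ z in (0:ℝ)..1, log (1 + t * (1 - z ^ 2) / 4) * (1 - z ^ 2)) / 4 := by
          rw [← intervalIntegral.integral_div]
          congr with z
          ring_nf
      _ = t / 8 * ∫ z in (0:ℝ)..1, (z ^ 2 - z ^ 4 / 3) / (1 + t * (1 - z ^ 2) / 4) := by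
          rw [hparts, ← intervalIntegral.integral_neg, ← intervalIntegral.integral_const_mul,
            ← intervalIntegral.integral_div]
          refine integral_congr fun z hz => ?_
          field_simp [(hpos z hz).ne']
          ring
  · have := (((hasDerivAt_pow 2 z).const_sub 1).const_mul t).div_const 4 |>.const_add 1
    exact (this.log (hpos z hz).ne').congr_deriv (by push_cast; ring)
  · exact ((hasDerivAt_id z).sub ((hasDerivAt_pow 3 z).div_const 3)).congr_deriv
      (by push_cast; ring)
  · exact (ContinuousOn.div (by fun_prop) (by fun_prop) fun z hz => (hpos z hz).ne')
      |>.intervalIntegrable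

lemma uehlingU_eq_pvRemainder (k : EuclideanSpace ℝ (Fin 3)) :
    uehlingU k = 2 / π * pvRemainder (‖k‖ ^ 2) := by
  have hK : 0 ≤ ‖k‖ ^ 2 := by positivity
  rw [pvRemainder, integral_comp_mul_one_sub (fun s => s * log (1 + s * ‖k‖ ^ 2))
    (intervalIntegrable_pvRemainder_integrand hK), integral_mul_log_one_add_eq hK, uehlingU]
  field_simp
  ring

lemma sub_pvM_eq {c m : Fin 3 → ℝ} {Λ : ℝ} (hm : ∀ j, m j ≠ 0)
    (hΛ : log (Λ ^ 2) = -∑ j, c j * log (m j ^ 2)) (k : EuclideanSpace ℝ (Fin 3)) :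
    2 * log Λ / (3 * π) - pvM c m k = 2 / π * ∑ j, c j * pvRemainder (‖k‖ ^ 2 / m j ^ 2) := by
  have hsplit (j : Fin 3) :=
    integral_mul_log_add_eq (pow_two_pos_of_ne_zero (hm j)) (sq_nonneg ‖k‖)
  simp only [pvM, hsplit, mul_add, Finset.sum_add_distrib]
  have hlogs : ∑ j, c j * (log (m j ^ 2) / 6) = -log Λ / 3 := by
    rw [log_pow, Nat.cast_ofNat] at hΛ
    simp only [← mul_div_assoc, ← Finset.sum_div]
    linarith
  rw [hlogs]
  ring

theorem pvM_tendsto_uehling_general (c m : ℝ → Fin 3 → ℝ)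
    (hc0 : ∀ Λ : ℝ, c Λ 0 = 1) (hm0 : ∀ Λ : ℝ, m Λ 0 = 1)
    (hlog : ∀ᶠ Λ : ℝ in atTop,
      Real.log (Λ ^ 2) = -∑ j : Fin 3, c Λ j * Real.log ((m Λ j) ^ 2))
    (hcbound : ∃ C : ℝ, ∀ Λ : ℝ, ∀ j : Fin 3, |c Λ j| ≤ C)
    (hm1 : Tendsto (fun Λ : ℝ => m Λ 1) atTop atTop)
    (hm2 : Tendsto (fun Λ : ℝ => m Λ 2) atTop atTop)
    (k : EuclideanSpace ℝ (Fin 3)) :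
    Tendsto (fun Λ : ℝ => (2 * Real.log Λ) / (3 * π) - pvM (c Λ) (m Λ) k) atTop
      (nhds (uehlingU k)) := by
  obtain ⟨C, hC⟩ := hcbound
  have hvanish (j : Fin 3) (hmj : Tendsto (fun Λ => m Λ j) atTop atTop) :
      Tendsto (fun Λ => c Λ j * pvRemainder (‖k‖ ^ 2 / m Λ j ^ 2)) atTop (𝓝 0) :=
    isBoundedUnder_le_mul_tendsto_zero ⟨C, eventually_map.2 (.of_forall fun Λ => hC Λ j)⟩
      (tendsto_pvRemainder_div (sq_nonneg ‖k‖) ((tendsto_pow_atTop two_ne_zero).comp hmj))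
  have hlim : Tendsto (fun Λ => 2 / π * ∑ j, c Λ j * pvRemainder (‖k‖ ^ 2 / m Λ j ^ 2)) atTop
      (𝓝 (2 / π * pvRemainder (‖k‖ ^ 2))) := by
    simp only [Fin.sum_univ_three, hc0, hm0, one_pow, div_one, one_mul]
    simpa using ((tendsto_const_nhds.add (hvanish 1 hm1)).add (hvanish 2 hm2)).const_mul (2 / π)
  rw [uehlingU_eq_pvRemainder]
  refine hlim.congr' ?_
  filter_upwards [hlog, hm1.eventually_gt_atTop 0, hm2.eventually_gt_atTop 0] with Λ hΛ h1 h2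
  refine (sub_pvM_eq (fun j => ?_) hΛ k).symm
  fin_cases j <;> simp [hm0, h1.ne', h2.ne']

/-- As `Λ → ∞` with masses `m₁(Λ), m₂(Λ) → ∞` chosen under the Pauli–Villars conditions
(with `m₀ = 1`, bounded coefficients, and `log Λ² = -Σⱼ cⱼ log mⱼ²`), the multiplier `M`
converges pointwise: `(2 log Λ)/(3π) - M(k) → U(k)`. -/
theorem pvM_tendsto_uehling (c m : ℝ → Fin 3 → ℝ)
    (hc0 : ∀ Λ : ℝ, c Λ 0 = 1) (hm0 : ∀ Λ : ℝ, m Λ 0 = 1)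
    (hmpos : ∀ Λ : ℝ, ∀ j : Fin 3, 0 < m Λ j)
    (hsum : ∀ Λ : ℝ, ∑ j : Fin 3, c Λ j = 0)
    (hsum2 : ∀ Λ : ℝ, ∑ j : Fin 3, c Λ j * (m Λ j) ^ 2 = 0)
    (hlog : ∀ᶠ Λ : ℝ in atTop,
      Real.log (Λ ^ 2) = -∑ j : Fin 3, c Λ j * Real.log ((m Λ j) ^ 2))
    (hcbound : ∃ C : ℝ, ∀ Λ : ℝ, ∀ j : Fin 3, |c Λ j| ≤ C)
    (hm1 : Tendsto (fun Λ : ℝ => m Λ 1) atTop atTop)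
    (hm2 : Tendsto (fun Λ : ℝ => m Λ 2) atTop atTop)
    (k : EuclideanSpace ℝ (Fin 3)) :
    Tendsto (fun Λ : ℝ => (2 * Real.log Λ) / (3 * π) - pvM (c Λ) (m Λ) k) atTop
      (nhds (uehlingU k)) :=
  pvM_tendsto_uehling_general c m hc0 hm0 hlog hcbound hm1 hm2 k
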